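/- Let κ be an admissible weight (increasing, doubling, and κ(r)/log(4+r) decreasing) and define φ(λ) = 4π ∫₀^∞ (1−cos r) r^{−5/2} κ(λ/r) dr. Then there exist constants c, C > 0 such that c·κ(λ) ≤ φ(λ) ≤ C·κ(λ) for all λ ≥ 0. -/

import Mathlib

open MeasureTheory Set Real

noncomputable def Gfun : ℝ → ℝ :=
  fun r => (1 - Real.cos r) * r ^ (-(5 / 2) : ℝ) * (1 + max (Real.log (2 / r)) 0 / Real.log 4)

lemma rpow_contOn (c : ℝ) : ContinuousOn (fun r : ℝ => r ^ c) (Set.Ioi (0:ℝ)) :=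
  fun x hx => (Real.continuousAt_rpow_const x c (Or.inl (ne_of_gt hx))).continuousWithinAt

lemma Gfun_contOn : ContinuousOn Gfun (Set.Ioi (0:ℝ)) := by
  unfold Gfun
  have hdiv : ContinuousOn (fun r : ℝ => 2 / r) (Set.Ioi (0:ℝ)) :=
    continuousOn_const.div continuousOn_id (fun x hx => ne_of_gt hx)
  have hlog : ContinuousOn (fun r : ℝ => Real.log (2 / r)) (Set.Ioi (0:ℝ)) := by
    apply Real.continuousOn_log.comp hdiv
    intro x hx
    have hx' : (0:ℝ) < x := hx
    simp only [Set.mem_compl_iff, Set.mem_singleton_iff]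
    positivity
  exact (((continuous_const.sub Real.continuous_cos).continuousOn).mul (rpow_contOn _)).mul
    (continuousOn_const.add ((hlog.sup continuousOn_const).div_const _))

lemma log4_pos : (0:ℝ) < Real.log 4 := Real.log_pos (by norm_num)

lemma Gfun_nonneg {r : ℝ} (hr : 0 < r) : 0 ≤ Gfun r := by
  have h1 : 0 ≤ 1 - Real.cos r := by linarith [Real.cos_le_one r]
  have h2 : 0 ≤ r ^ (-(5/2) : ℝ) := Real.rpow_nonneg hr.le _
  have h3 : 0 ≤ 1 + max (Real.log (2/r)) 0 / Real.log 4 := by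
    have h4 := log4_pos
    exact add_nonneg zero_le_one (div_nonneg (le_max_right _ _) h4.le)
  exact mul_nonneg (mul_nonneg h1 h2) h3

lemma Gfun_integrable : IntegrableOn Gfun (Set.Ioi (0:ℝ)) := by
  rw [show Set.Ioi (0:ℝ) = Set.Ioc 0 1 ∪ Set.Ioi 1 from (Set.Ioc_union_Ioi_eq_Ioi (by norm_num)).symm]
  have L4 := log4_pos
  apply MeasureTheory.IntegrableOn.union
  · -- on Ioc 0 1
    have hdom : IntegrableOn (fun r : ℝ => (1 + 4 * 2 ^ ((1:ℝ)/4) / Real.log 4) * r ^ (-(3/4) : ℝ)) (Set.Ioc 0 1) := by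
      apply Integrable.const_mul
      have h := intervalIntegral.intervalIntegrable_rpow' (a := (0:ℝ)) (b := 1) (r := (-(3/4) : ℝ)) (by norm_num)
      rwa [intervalIntegrable_iff_integrableOn_Ioc_of_le (by norm_num)] at h
    refine hdom.mono' ((Gfun_contOn.mono Set.Ioc_subset_Ioi_self).aestronglyMeasurable measurableSet_Ioc) ?_
    rw [ae_restrict_iff' measurableSet_Ioc]
    refine Filter.Eventually.of_forall (fun r hr => ?_)
    obtain ⟨hr0, hr1⟩ := hr
    rw [Real.norm_of_nonneg (Gfun_nonneg hr0)]
    have h2r : (0:ℝ) < 2 / r := by positivity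
    have hmax : max (Real.log (2/r)) 0 = Real.log (2/r) :=
      max_eq_left (Real.log_nonneg (by rw [le_div_iff₀ hr0]; linarith))
    -- log (2/r) ≤ 4 * 2^{1/4} * r^{-1/4}
    have hlog1 : Real.log (2/r) ≤ 4 * ((2/r) ^ ((1:ℝ)/4)) := by
      have h := Real.log_le_sub_one_of_pos (Real.rpow_pos_of_pos h2r ((1:ℝ)/4))
      have h2 : Real.log ((2/r) ^ ((1:ℝ)/4)) = (1/4) * Real.log (2/r) := Real.log_rpow h2r _
      nlinarith [Real.rpow_pos_of_pos h2r ((1:ℝ)/4)]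
    have hsplit : (2/r) ^ ((1:ℝ)/4) = 2 ^ ((1:ℝ)/4) * r ^ (-(1/4) : ℝ) := by
      rw [Real.div_rpow (by norm_num) hr0.le, Real.rpow_neg hr0.le, div_eq_mul_inv]
    -- 1 - cos r ≤ r^2
    have hcos : 1 - Real.cos r ≤ r ^ ((2:ℝ)) := by
      have := Real.one_sub_sq_div_two_le_cos (x := r)
      have h2 : r ^ ((2:ℝ)) = r ^ (2:ℕ) := by
        rw [← Real.rpow_natCast r 2]; norm_num
      rw [h2]; nlinarith [sq_nonneg r]
    have ha : r ^ ((2:ℝ)) * r ^ (-(5/2) : ℝ) = r ^ (-(1/2) : ℝ) := by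
      rw [← Real.rpow_add hr0]; norm_num
    have hb : r ^ (-(1/2) : ℝ) * r ^ (-(1/4) : ℝ) = r ^ (-(3/4) : ℝ) := by
      rw [← Real.rpow_add hr0]; norm_num
    have hab : r ^ (-(1/2) : ℝ) ≤ r ^ (-(3/4) : ℝ) :=
      Real.rpow_le_rpow_of_exponent_ge hr0 hr1 (by norm_num)
    have hcm : (1 - Real.cos r) * r ^ (-(5/2) : ℝ) ≤ r ^ (-(1/2) : ℝ) := by
      rw [← ha]
      exact mul_le_mul_of_nonneg_right hcos (Real.rpow_nonneg hr0.le _)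
    have hA : max (Real.log (2/r)) 0 ≤ 4 * 2 ^ ((1:ℝ)/4) * r ^ (-(1/4) : ℝ) := by
      rw [hmax]
      calc Real.log (2/r) ≤ 4 * ((2/r) ^ ((1:ℝ)/4)) := hlog1
        _ = 4 * 2 ^ ((1:ℝ)/4) * r ^ (-(1/4) : ℝ) := by rw [hsplit]; ring
    have hApos : 0 ≤ max (Real.log (2/r)) 0 := le_max_right _ _
    have h1c : 0 ≤ 1 - Real.cos r := by linarith [Real.cos_le_one r]
    have hrp : (0:ℝ) ≤ r ^ (-(1/2) : ℝ) := Real.rpow_nonneg hr0.le _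
    have hrq : (0:ℝ) ≤ r ^ (-(1/4) : ℝ) := Real.rpow_nonneg hr0.le _
    calc Gfun r = ((1 - Real.cos r) * r ^ (-(5/2) : ℝ)) * (1 + max (Real.log (2/r)) 0 / Real.log 4) := rfl
      _ ≤ r ^ (-(1/2) : ℝ) * (1 + (4 * 2 ^ ((1:ℝ)/4) * r ^ (-(1/4) : ℝ)) / Real.log 4) := by
          have hpos2 : 0 ≤ 1 + max (Real.log (2/r)) 0 / Real.log 4 := by positivity
          apply mul_le_mul hcm _ hpos2 hrp
          have := div_le_div_of_nonneg_right (c := Real.log 4) hA L4.le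
          linarith
      _ = r ^ (-(1/2) : ℝ) + (4 * 2 ^ ((1:ℝ)/4) / Real.log 4) * (r ^ (-(1/2) : ℝ) * r ^ (-(1/4) : ℝ)) := by
          field_simp
      _ = r ^ (-(1/2) : ℝ) + (4 * 2 ^ ((1:ℝ)/4) / Real.log 4) * r ^ (-(3/4) : ℝ) := by rw [hb]
      _ ≤ r ^ (-(3/4) : ℝ) + (4 * 2 ^ ((1:ℝ)/4) / Real.log 4) * r ^ (-(3/4) : ℝ) := by linarith
      _ = (1 + 4 * 2 ^ ((1:ℝ)/4) / Real.log 4) * r ^ (-(3/4) : ℝ) := by ring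
  · -- on Ioi 1
    have hdom : IntegrableOn (fun r : ℝ => (2 * (1 + Real.log 2 / Real.log 4)) * r ^ (-(5/2) : ℝ)) (Set.Ioi 1) :=
      (integrableOn_Ioi_rpow_of_lt (by norm_num) one_pos).const_mul _
    refine hdom.mono' ((Gfun_contOn.mono (Set.Ioi_subset_Ioi (by norm_num))).aestronglyMeasurable measurableSet_Ioi) ?_
    rw [ae_restrict_iff' measurableSet_Ioi]
    refine Filter.Eventually.of_forall (fun r hr => ?_)
    have hr1 : (1:ℝ) < r := hr
    have hr0 : (0:ℝ) < r := by linarith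
    rw [Real.norm_of_nonneg (Gfun_nonneg hr0)]
    have hA : max (Real.log (2/r)) 0 ≤ Real.log 2 := by
      apply max_le _ (Real.log_nonneg (by norm_num))
      apply Real.log_le_log (by positivity)
      rw [div_le_iff₀ hr0]; nlinarith
    have h1c : 1 - Real.cos r ≤ 2 := by linarith [Real.neg_one_le_cos r]
    have h1c' : 0 ≤ 1 - Real.cos r := by linarith [Real.cos_le_one r]
    have hrp : (0:ℝ) ≤ r ^ (-(5/2) : ℝ) := Real.rpow_nonneg hr0.le _
    have hApos : 0 ≤ max (Real.log (2/r)) 0 := le_max_right _ _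
    calc Gfun r = ((1 - Real.cos r) * r ^ (-(5/2) : ℝ)) * (1 + max (Real.log (2/r)) 0 / Real.log 4) := rfl
      _ ≤ (2 * r ^ (-(5/2) : ℝ)) * (1 + Real.log 2 / Real.log 4) := by
          apply mul_le_mul (mul_le_mul_of_nonneg_right h1c hrp)
          · have := div_le_div_of_nonneg_right (c := Real.log 4) hA L4.le
            linarith
          · positivity
          · positivity
      _ = (2 * (1 + Real.log 2 / Real.log 4)) * r ^ (-(5/2) : ℝ) := by ring

theorem stmt_8 (κ : ℝ → ℝ) (c₀ : ℝ)
    (hκ1 : ∀ r : ℝ, 0 ≤ r → 1 ≤ κ r)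
    (hmono : ∀ r s : ℝ, 0 ≤ r → r ≤ s → κ r ≤ κ s)
    (hdbl : ∀ r : ℝ, 0 ≤ r → κ (2 * r) ≤ c₀ * κ r)
    (hlog : ∀ r s : ℝ, 0 ≤ r → r ≤ s →
      κ s / Real.log (4 + s) ≤ κ r / Real.log (4 + r)) :
    ∃ c C : ℝ, 0 < c ∧ 0 < C ∧ ∀ lam : ℝ, 0 ≤ lam →
      (c * κ lam ≤
          4 * Real.pi *
            ∫ r in Set.Ioi (0 : ℝ), (1 - Real.cos r) * r ^ (-(5 / 2) : ℝ) * κ (lam / r)) ∧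
        4 * Real.pi *
            (∫ r in Set.Ioi (0 : ℝ), (1 - Real.cos r) * r ^ (-(5 / 2) : ℝ) * κ (lam / r)) ≤
          C * κ lam := by
  have hπ : (0:ℝ) < Real.pi := Real.pi_pos
  have hc₀ : (1:ℝ) ≤ c₀ := by
    have h0 := hdbl 0 le_rfl
    have h1 := hκ1 0 le_rfl
    have h2 : κ (2 * 0) = κ 0 := by norm_num
    nlinarith
  have hc₀0 : (0:ℝ) < c₀ := by linarith
  have L4 := log4_pos
  set IG := ∫ r in Set.Ioi (0:ℝ), Gfun r with hIG
  have hIGnonneg : 0 ≤ IG :=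
    setIntegral_nonneg measurableSet_Ioi (fun r hr => Gfun_nonneg hr)
  have hcos1 : Real.cos 1 < 1 := by
    have h := Real.cos_lt_cos_of_nonneg_of_le_pi le_rfl
      (le_trans one_le_two Real.two_le_pi) one_pos
    rwa [Real.cos_zero] at h
  have h2p : (0:ℝ) < 2 ^ (-(5/2):ℝ) := Real.rpow_pos_of_pos two_pos _
  refine ⟨4 * Real.pi * ((1 - Real.cos 1) * 2 ^ (-(5/2):ℝ)) / c₀, 4 * Real.pi * IG + 1,
    ?_, ?_, ?_⟩
  · have h1 : 0 < 1 - Real.cos 1 := by linarith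
    positivity
  · positivity
  · intro lam hlam
    have hκlam1 : 1 ≤ κ lam := hκ1 lam hlam
    have key : ∀ r ∈ Set.Ioi (0:ℝ),
        κ (lam / r) ≤ κ lam * (1 + max (Real.log (2/r)) 0 / Real.log 4) := by
      intro r hr
      have hr0 : (0:ℝ) < r := hr
      have hlr : 0 ≤ lam / r := div_nonneg hlam hr0.le
      by_cases h1r : 1 ≤ r
      · have hdl : lam / r ≤ lam := by
          rw [div_le_iff₀ hr0]; nlinarith
        have h := hmono _ _ hlr hdl
        have hmax0 : 0 ≤ max (Real.log (2/r)) 0 / Real.log 4 :=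
          div_nonneg (le_max_right _ _) L4.le
        nlinarith
      · push_neg at h1r
        have h2r1 : (1:ℝ) ≤ 2 / r := by rw [le_div_iff₀ hr0]; linarith
        have hlog2r : 0 ≤ Real.log (2/r) := Real.log_nonneg h2r1
        have hmax : max (Real.log (2/r)) 0 = Real.log (2/r) := max_eq_left hlog2r
        have hle : lam ≤ lam / r := by
          rw [le_div_iff₀ hr0]; nlinarith
        have hlg := hlog lam (lam / r) hlam hle
        have hl4lam : Real.log 4 ≤ Real.log (4 + lam) :=
          Real.log_le_log (by norm_num) (by linarith)
        have hl4pos : 0 < Real.log (4 + lam) := lt_of_lt_of_le L4 hl4lam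
        have hineq : (4:ℝ) + lam / r ≤ (4 + lam) * (2 / r) := by
          have he : (4+lam)*(2/r) = 8/r + 2*(lam/r) := by ring
          rw [he]
          have h8 : (4:ℝ) ≤ 8 / r := by rw [le_div_iff₀ hr0]; linarith
          linarith
        have hlogineq : Real.log (4 + lam / r) ≤ Real.log (4 + lam) + Real.log (2/r) := by
          calc Real.log (4 + lam/r) ≤ Real.log ((4+lam)*(2/r)) :=
                Real.log_le_log (by linarith) hineq
            _ = Real.log (4+lam) + Real.log (2/r) :=
                Real.log_mul (by linarith) (by positivity)
        have hl4r : 0 < Real.log (4 + lam/r) := Real.log_pos (by linarith)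
        have h2 : κ (lam/r) * Real.log (4+lam) ≤ κ lam * Real.log (4+lam/r) := by
          rw [div_le_div_iff₀ hl4r hl4pos] at hlg; exact hlg
        have hκpos : (0:ℝ) < κ lam := by linarith
        have hmid : κ (lam/r) ≤ κ lam * (1 + Real.log (2/r)/Real.log (4+lam)) := by
          calc κ (lam/r) = κ (lam/r) * Real.log (4+lam) / Real.log (4+lam) := by
                field_simp
            _ ≤ κ lam * Real.log (4+lam/r) / Real.log (4+lam) := by
                apply div_le_div_of_nonneg_right h2 hl4pos.le
            _ ≤ κ lam * (Real.log (4+lam) + Real.log (2/r)) / Real.log (4+lam) := by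
                apply div_le_div_of_nonneg_right _ hl4pos.le
                exact mul_le_mul_of_nonneg_left hlogineq hκpos.le
            _ = κ lam * (1 + Real.log (2/r)/Real.log (4+lam)) := by
                field_simp
        have h3 : Real.log (2/r) / Real.log (4+lam) ≤ Real.log (2/r) / Real.log 4 :=
          div_le_div_of_nonneg_left hlog2r L4 hl4lam
        rw [hmax]
        calc κ (lam/r) ≤ κ lam * (1 + Real.log (2/r)/Real.log (4+lam)) := hmid
          _ ≤ κ lam * (1 + Real.log (2/r)/Real.log 4) := by nlinarith
    set F := fun r : ℝ => (1 - Real.cos r) * r ^ (-(5 / 2) : ℝ) * κ (lam / r) with hF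
    have hFnonneg : ∀ r ∈ Set.Ioi (0:ℝ), 0 ≤ F r := by
      intro r hr
      have hr0 : (0:ℝ) < r := hr
      have hκr := hκ1 (lam/r) (div_nonneg hlam hr0.le)
      have h1 : 0 ≤ 1 - Real.cos r := by linarith [Real.cos_le_one r]
      have h2 : 0 ≤ r ^ (-(5/2):ℝ) := Real.rpow_nonneg hr0.le _
      have : (0:ℝ) ≤ (1 - Real.cos r) * r ^ (-(5 / 2) : ℝ) * κ (lam / r) :=
        mul_nonneg (mul_nonneg h1 h2) (by linarith)
      simpa [hF] using this
    have hFbound : ∀ r ∈ Set.Ioi (0:ℝ), F r ≤ κ lam * Gfun r := by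
      intro r hr
      have hr0 : (0:ℝ) < r := hr
      have h1 : 0 ≤ 1 - Real.cos r := by linarith [Real.cos_le_one r]
      have h2 : 0 ≤ r ^ (-(5/2):ℝ) := Real.rpow_nonneg hr0.le _
      have hk := key r hr
      show (1 - Real.cos r) * r ^ (-(5 / 2) : ℝ) * κ (lam / r) ≤ κ lam * Gfun r
      unfold Gfun
      calc (1 - Real.cos r) * r ^ (-(5 / 2) : ℝ) * κ (lam / r)
          ≤ (1 - Real.cos r) * r ^ (-(5 / 2) : ℝ) *
              (κ lam * (1 + max (Real.log (2/r)) 0 / Real.log 4)) :=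
            mul_le_mul_of_nonneg_left hk (mul_nonneg h1 h2)
        _ = κ lam * ((1 - Real.cos r) * r ^ (-(5 / 2) : ℝ) *
              (1 + max (Real.log (2 / r)) 0 / Real.log 4)) := by ring
    have hFmeas : AEStronglyMeasurable F (volume.restrict (Set.Ioi (0:ℝ))) := by
      have hκm : Measurable fun x : ℝ => κ (max x 0) := by
        have hm : Monotone fun x : ℝ => κ (max x 0) := fun a b hab =>
          hmono _ _ (le_max_right a 0) (max_le_max hab le_rfl)
        exact hm.measurable
      have hcomp : Measurable fun r : ℝ => κ (max (lam / r) 0) :=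
        hκm.comp (measurable_const.div measurable_id)
      have hf : AEStronglyMeasurable
          (fun r : ℝ => (1 - Real.cos r) * r ^ (-(5 / 2):ℝ)) (volume.restrict (Set.Ioi (0:ℝ))) :=
        (((continuous_const.sub Real.continuous_cos).continuousOn).mul
          (rpow_contOn _)).aestronglyMeasurable measurableSet_Ioi
      have hprod := hf.mul hcomp.aestronglyMeasurable.restrict
      refine hprod.congr ?_
      rw [Filter.EventuallyEq, ae_restrict_iff' measurableSet_Ioi]
      refine Filter.Eventually.of_forall (fun r hr => ?_)
      have hr0 : (0:ℝ) < r := hr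
      have : max (lam / r) 0 = lam / r := max_eq_left (div_nonneg hlam hr0.le)
      simp [hF, this]
    have hFint : IntegrableOn F (Set.Ioi (0:ℝ)) := by
      refine Integrable.mono' (Gfun_integrable.const_mul (κ lam)) hFmeas ?_
      rw [ae_restrict_iff' measurableSet_Ioi]
      refine Filter.Eventually.of_forall (fun r hr => ?_)
      rw [Real.norm_of_nonneg (hFnonneg r hr)]
      exact hFbound r hr
    have h4π : (0:ℝ) ≤ 4 * Real.pi := by positivity
    constructor
    · -- lower bound
      have hsub : Set.Ioc (1:ℝ) 2 ⊆ Set.Ioi 0 := fun x hx => lt_trans one_pos hx.1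
      have hstep1 : ∫ r in Set.Ioc (1:ℝ) 2, F r ≤ ∫ r in Set.Ioi (0:ℝ), F r := by
        apply setIntegral_mono_set hFint
        · rw [Filter.EventuallyLE, ae_restrict_iff' measurableSet_Ioi]
          exact Filter.Eventually.of_forall (fun r hr => hFnonneg r hr)
        · exact HasSubset.Subset.eventuallyLE hsub
      have hstep2 : (1 - Real.cos 1) * 2 ^ (-(5/2):ℝ) * (κ lam / c₀) *
          (volume (Set.Ioc (1:ℝ) 2)).toReal ≤ ∫ r in Set.Ioc (1:ℝ) 2, F r := by
        apply setIntegral_ge_of_const_le_real measurableSet_Ioc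
          (measure_Ioc_lt_top).ne ?_ (hFint.mono_set hsub)
        intro r hr
        obtain ⟨hr1, hr2⟩ := hr
        have hr0 : (0:ℝ) < r := by linarith
        have hc1 : 1 - Real.cos 1 ≤ 1 - Real.cos r := by
          have := Real.cos_le_cos_of_nonneg_of_le_pi (by norm_num)
            (le_trans hr2 Real.two_le_pi) hr1.le
          linarith
        have hc1' : (0:ℝ) ≤ 1 - Real.cos 1 := by linarith
        have hrp : (2:ℝ) ^ (-(5/2):ℝ) ≤ r ^ (-(5/2):ℝ) :=
          Real.rpow_le_rpow_of_nonpos hr0 hr2 (by norm_num)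
        have hκr : κ lam / c₀ ≤ κ (lam / r) := by
          have hd := hdbl (lam/2) (by positivity)
          have h2' : (2:ℝ) * (lam/2) = lam := by ring
          rw [h2'] at hd
          have hmono2 : κ (lam/2) ≤ κ (lam/r) :=
            hmono _ _ (by positivity) (div_le_div_of_nonneg_left hlam hr0 hr2)
          rw [div_le_iff₀ hc₀0]
          nlinarith [hκ1 (lam/2) (by positivity : (0:ℝ) ≤ lam/2)]
        have hκr' : 0 ≤ κ lam / c₀ := div_nonneg (by linarith) hc₀0.le
        have hcos_r : 0 ≤ 1 - Real.cos r := by linarith [Real.cos_le_one r]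
        calc (1 - Real.cos 1) * 2 ^ (-(5/2):ℝ) * (κ lam / c₀)
            ≤ (1 - Real.cos r) * r ^ (-(5/2):ℝ) * κ (lam/r) := by
              apply mul_le_mul (mul_le_mul hc1 hrp h2p.le hcos_r) hκr hκr'
              exact mul_nonneg hcos_r (Real.rpow_nonneg hr0.le _)
          _ = F r := by rfl
      have hvol : (volume (Set.Ioc (1:ℝ) 2)).toReal = 1 := by
        rw [Real.volume_Ioc]; norm_num
      rw [hvol, mul_one] at hstep2
      have hfin : 4 * Real.pi * ((1 - Real.cos 1) * 2 ^ (-(5/2):ℝ) * (κ lam / c₀)) ≤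
          4 * Real.pi * ∫ r in Set.Ioi (0:ℝ), F r :=
        mul_le_mul_of_nonneg_left (hstep2.trans hstep1) h4π
      have heq : 4 * Real.pi * ((1 - Real.cos 1) * 2 ^ (-(5/2):ℝ)) / c₀ * κ lam =
          4 * Real.pi * ((1 - Real.cos 1) * 2 ^ (-(5/2):ℝ) * (κ lam / c₀)) := by
        field_simp
      rw [heq]
      exact hfin
    · -- upper bound
      have hmul : κ lam * IG = ∫ r in Set.Ioi (0:ℝ), κ lam * Gfun r :=
        (MeasureTheory.integral_const_mul _ _).symm
      have hstep : ∫ r in Set.Ioi (0:ℝ), F r ≤ κ lam * IG := by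
        rw [hmul]
        exact setIntegral_mono_on hFint (Gfun_integrable.const_mul _) measurableSet_Ioi hFbound
      have h1 : 4 * Real.pi * ∫ r in Set.Ioi (0:ℝ), F r ≤ 4 * Real.pi * (κ lam * IG) :=
        mul_le_mul_of_nonneg_left hstep h4π
      nlinarith
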